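/- arXiv:1010.3083 — 3 statements merged into one kernel-verified Lean document; each statement's English description precedes it below -/
import Mathlib

section
/- Assume C = −A, that A and β are nonzero, and that P and Q' are nondegenerate. Then N is a nonempty connected subset of ((Fin n → ℝ) × ℝ) × ((Fin m → ℝ) × ℝ × ℝ) (indeed, N contains no cycles and consists of a single path on the 1-skeleton of P × Q'). -/
open Finset

/-- Membership in the standard probability simplex. -/
def InSimplex {d : ℕ} (x : Fin d → ℝ) : Prop := (∀ i, 0 ≤ x i) ∧ ∑ i, x i = 1

/-- `(x, y)` is a Nash equilibrium of the bimatrix game `(A, B)`. -/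
def IsNash {m n : ℕ} (A B : Fin m → Fin n → ℝ) (x : Fin m → ℝ) (y : Fin n → ℝ) : Prop :=
  InSimplex x ∧ InSimplex y ∧
    (∀ x', InSimplex x' → ∑ i, ∑ j, x' i * A i j * y j ≤ ∑ i, ∑ j, x i * A i j * y j) ∧
    (∀ y', InSimplex y' → ∑ i, ∑ j, x i * B i j * y' j ≤ ∑ i, ∑ j, x i * B i j * y j)

/-- Membership in the row player's best-response polytope `P`. -/
def MemP {m n : ℕ} (A : Fin m → Fin n → ℝ) (v : (Fin n → ℝ) × ℝ) : Prop :=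
  (∀ i, ∑ j, A i j * v.1 j ≤ v.2) ∧ (∀ j, 0 ≤ v.1 j) ∧ ∑ j, v.1 j = 1

/-- Membership in the extended polytope `Q'`. -/
def MemQ' {m n : ℕ} (C : Fin m → Fin n → ℝ) (β : Fin n → ℝ)
    (w : (Fin m → ℝ) × ℝ × ℝ) : Prop :=
  (∀ i, 0 ≤ w.1 i) ∧ (∀ j, ∑ i, w.1 i * C i j + β j * w.2.1 ≤ w.2.2) ∧ ∑ i, w.1 i = 1

/-- Tight labels at a point of `P`. -/
def LabelP {m n : ℕ} (A : Fin m → Fin n → ℝ) (v : (Fin n → ℝ) × ℝ) : Set (Fin m ⊕ Fin n) :=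
  {l | Sum.elim (fun i => ∑ j, A i j * v.1 j = v.2) (fun j => v.1 j = 0) l}

/-- Tight labels at a point of `Q'`. -/
def LabelQ' {m n : ℕ} (C : Fin m → Fin n → ℝ) (β : Fin n → ℝ)
    (w : (Fin m → ℝ) × ℝ × ℝ) : Set (Fin m ⊕ Fin n) :=
  {l | Sum.elim (fun i => w.1 i = 0) (fun j => ∑ i, w.1 i * C i j + β j * w.2.1 = w.2.2) l}

/-- `p` is a fully-labeled pair of `P × Q'`, i.e. an element of `N`. -/
def MemN {m n : ℕ} (A C : Fin m → Fin n → ℝ) (β : Fin n → ℝ)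
    (p : ((Fin n → ℝ) × ℝ) × ((Fin m → ℝ) × ℝ × ℝ)) : Prop :=
  MemP A p.1 ∧ MemQ' C β p.2 ∧
    ∀ l : Fin m ⊕ Fin n, l ∈ LabelP A p.1 ∪ LabelQ' C β p.2

lemma minimax {m n : ℕ} (hm : 1 ≤ m) (hn : 1 ≤ n) (M : Fin m → Fin n → ℝ) :
    ∃ x y v, InSimplex x ∧ InSimplex y ∧
      (∀ i, ∑ j, M i j * y j ≤ v) ∧ (∀ j, v ≤ ∑ i, x i * M i j) := by
  haveI : NeZero m := ⟨by omega⟩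
  haveI : NeZero n := ⟨by omega⟩
  have hne : (Finset.univ : Finset (Fin m)).Nonempty := univ_nonempty
  set φ : (Fin n → ℝ) → ℝ := fun y => univ.sup' hne (fun i => ∑ j, M i j * y j) with hφ
  have hφc : Continuous φ := by
    apply Continuous.finset_sup'_apply hne
    intro i _
    exact continuous_finset_sum _ fun j _ => continuous_const.mul (continuous_apply j)
  obtain ⟨y0, hy0s, hy0min⟩ := (isCompact_stdSimplex ℝ (Fin n)).exists_isMinOn
    ⟨_, single_mem_stdSimplex ℝ (0 : Fin n)⟩ hφc.continuousOn
  set v : ℝ := φ y0 with hv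
  -- the open convex set s and the convex set t
  set s : Set (Fin m → ℝ) := {z | ∀ i, z i < v} with hs
  set t : Set (Fin m → ℝ) :=
    {z | ∃ y ∈ stdSimplex ℝ (Fin n), ∀ i, ∑ j, M i j * y j ≤ z i} with ht
  have hsopen : IsOpen s := by
    have : s = ⋂ i, (fun z : Fin m → ℝ => z i) ⁻¹' Set.Iio v := by
      ext z; simp [hs]
    rw [this]
    exact isOpen_iInter_of_finite fun i => (continuous_apply i).isOpen_preimage _ isOpen_Iio
  have hsconv : Convex ℝ s := by
    have : s = ⋂ i, {z : Fin m → ℝ | z i < v} := by ext z; simp [hs]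
    rw [this]
    exact convex_iInter fun i =>
      convex_halfSpace_lt ⟨fun a b => rfl, fun c a => rfl⟩ v
  have htconv : Convex ℝ t := by
    rintro z1 ⟨y1, hy1, h1⟩ z2 ⟨y2, hy2, h2⟩ a b ha hb hab
    refine ⟨a • y1 + b • y2, convex_stdSimplex ℝ _ hy1 hy2 ha hb hab, fun i => ?_⟩
    have : ∑ j, M i j * (a • y1 + b • y2) j
        = a * ∑ j, M i j * y1 j + b * ∑ j, M i j * y2 j := by
      simp only [Pi.add_apply, Pi.smul_apply, smul_eq_mul, mul_add, Finset.sum_add_distrib,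
        Finset.mul_sum]
      congr 1 <;> exact Finset.sum_congr rfl fun j _ => by ring
    rw [this]
    have := add_le_add (mul_le_mul_of_nonneg_left (h1 i) ha)
      (mul_le_mul_of_nonneg_left (h2 i) hb)
    simpa using this
  have hdisj : Disjoint s t := by
    rw [Set.disjoint_left]
    rintro z hzs ⟨y, hy, hle⟩
    have h1 : φ y < v := by
      rw [hφ]
      exact Finset.sup'_lt_iff hne |>.mpr fun i _ => lt_of_le_of_lt (hle i) (hzs i)
    exact absurd (hy0min hy) (by simpa using h1)
  obtain ⟨f, u, hfs, hft⟩ := geometric_hahn_banach_open hsconv hsopen htconv hdisj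
  -- coordinates of f
  set x : Fin m → ℝ := fun i => f (fun j => if i = j then 1 else 0) with hx
  have hflin : ∀ a : Fin m → ℝ, f a = ∑ i, a i * x i := by
    intro a
    conv_lhs => rw [pi_eq_sum_univ a, map_sum]
    refine Finset.sum_congr rfl fun i _ => ?_
    rw [map_smul, smul_eq_mul, hx]
  -- the constant vector v is in t
  have hvt : (fun _ : Fin m => v) ∈ t := by
    refine ⟨y0, hy0s, fun i => ?_⟩
    exact Finset.le_sup' (fun i => ∑ j, M i j * y0 j) (Finset.mem_univ i)
  have hvu : u ≤ f (fun _ => v) := hft _ hvt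
  have hfconst : ∀ w : ℝ, f (fun _ => w) = ∑ i', w * x i' := fun w => hflin _
  have hxnn : ∀ i, 0 ≤ x i := by
    intro i
    by_contra hneg
    push_neg at hneg
    have h2 : 0 < -(x i) := by linarith
    have hxne : x i ≠ 0 := by linarith
    obtain ⟨c, hc0, hci⟩ : ∃ c : ℝ, 0 ≤ c ∧ c * x i = -(f (fun _ => v) - u + 1) := by
      refine ⟨(f (fun _ => v) - u + 1) / (-(x i)), div_nonneg (by linarith) h2.le, ?_⟩
      field_simp
    have hmem : (fun j => v + c * (if i = j then 1 else 0)) ∈ t := by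
      refine ⟨y0, hy0s, fun i' => ?_⟩
      show ∑ j, M i' j * y0 j ≤ v + c * (if i = i' then 1 else 0)
      have h1 : ∑ j, M i' j * y0 j ≤ v :=
        Finset.le_sup' (fun i => ∑ j, M i j * y0 j) (Finset.mem_univ i')
      have h2 : 0 ≤ c * (if i = i' then (1:ℝ) else 0) := by positivity
      linarith
    have hle := hft _ hmem
    rw [hflin] at hle
    have hexp : ∑ i', (v + c * (if i = i' then (1:ℝ) else 0)) * x i'
        = (∑ i', v * x i') + c * x i := by
      simp [add_mul, mul_ite, ite_mul, Finset.sum_add_distrib, Finset.sum_ite_eq]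
    rw [hexp, ← hfconst] at hle
    linarith
  -- some coordinate is nonzero
  have hfne : ∃ i, x i ≠ 0 := by
    by_contra hall
    push_neg at hall
    have hf0 : ∀ a, f a = 0 := fun a => by rw [hflin]; simp [hall]
    have h1 : (fun _ : Fin m => v - 1) ∈ s := by
      intro i; show v - 1 < v; linarith
    have h2 := hfs _ h1
    have h3 := hft _ hvt
    rw [hf0] at h2 h3
    linarith
  set σ : ℝ := ∑ i, x i with hσ
  have hσpos : 0 < σ := by
    obtain ⟨i, hi⟩ := hfne
    have h1 : 0 < x i := lt_of_le_of_ne (hxnn i) (Ne.symm hi)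
    have h2 := Finset.single_le_sum (f := x) (fun i _ => hxnn i) (Finset.mem_univ i)
    rw [hσ]; linarith
  have hvσu : v * σ ≤ u := by
    by_contra hlt
    push_neg at hlt
    set ε := (v * σ - u) / σ with hε
    have hεpos : 0 < ε := div_pos (by linarith) hσpos
    have hmem : (fun _ : Fin m => v - ε) ∈ s := by
      intro i; show v - ε < v; linarith
    have h1 := hfs _ hmem
    rw [hflin] at h1
    have h2 : ∑ i, (fun _ : Fin m => v - ε) i * x i = (v - ε) * σ := by
      rw [hσ, Finset.mul_sum]
    rw [h2] at h1
    have h3 : ε * σ = v * σ - u := by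
      rw [hε]; field_simp
    nlinarith
  have key : ∀ y ∈ stdSimplex ℝ (Fin n), u ≤ ∑ i, (∑ j, M i j * y j) * x i := by
    intro y hy
    have hyt : (fun i => ∑ j, M i j * y j) ∈ t := ⟨y, hy, fun i => le_rfl⟩
    have := hft _ hyt
    rwa [hflin] at this
  refine ⟨fun i => x i / σ, y0, v, ⟨fun i => div_nonneg (hxnn i) hσpos.le, ?_⟩,
    ⟨hy0s.1, hy0s.2⟩, fun i => Finset.le_sup' (fun i => ∑ j, M i j * y0 j) (Finset.mem_univ i),
    fun j => ?_⟩
  · rw [← Finset.sum_div, ← hσ, div_self (ne_of_gt hσpos)]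
  · have h1 := key (fun j' => if j = j' then 1 else 0) (ite_eq_mem_stdSimplex ℝ j)
    have h2 : ∑ i, (∑ j', M i j' * (if j = j' then (1:ℝ) else 0)) * x i
        = ∑ i, M i j * x i := by
      refine Finset.sum_congr rfl fun i _ => ?_
      congr 1
      simp [mul_ite, Finset.sum_ite_eq]
    rw [h2] at h1
    have hsum : ∑ i, (x i / σ) * M i j = (∑ i, x i * M i j) / σ := by
      rw [Finset.sum_div]
      exact Finset.sum_congr rfl fun i _ => by ring
    rw [hsum, le_div_iff₀ hσpos]
    have h3 : ∑ i, x i * M i j = ∑ i, M i j * x i :=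
      Finset.sum_congr rfl fun i _ => mul_comm _ _
    rw [h3]
    linarith

lemma value_eq {m n : ℕ} (M : Fin m → Fin n → ℝ) {x : Fin m → ℝ} {y : Fin n → ℝ} {v : ℝ}
    (hx : InSimplex x) (hy : InSimplex y)
    (h1 : ∀ i, ∑ j, M i j * y j ≤ v) (h2 : ∀ j, v ≤ ∑ i, x i * M i j) :
    ∑ i, ∑ j, x i * (M i j * y j) = v := by
  have hup : ∑ i, ∑ j, x i * (M i j * y j) ≤ v := by
    calc ∑ i, ∑ j, x i * (M i j * y j) = ∑ i, x i * ∑ j, M i j * y j :=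
          Finset.sum_congr rfl fun i _ => (Finset.mul_sum _ _ _).symm
      _ ≤ ∑ i, x i * v := Finset.sum_le_sum fun i _ => mul_le_mul_of_nonneg_left (h1 i) (hx.1 i)
      _ = v := by rw [← Finset.sum_mul, hx.2, one_mul]
  have hswap : ∑ i, ∑ j, x i * (M i j * y j) = ∑ j, (∑ i, x i * M i j) * y j := by
    rw [Finset.sum_comm]
    refine Finset.sum_congr rfl fun j _ => ?_
    rw [Finset.sum_mul]
    exact Finset.sum_congr rfl fun i _ => by ring
  have hlo : v ≤ ∑ i, ∑ j, x i * (M i j * y j) := by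
    rw [hswap]
    calc v = ∑ j, v * y j := by rw [← Finset.mul_sum, hy.2, mul_one]
      _ ≤ ∑ j, (∑ i, x i * M i j) * y j :=
          Finset.sum_le_sum fun j _ => mul_le_mul_of_nonneg_right (h2 j) (hy.1 j)
  linarith

lemma compl_zero {d : ℕ} {w g : Fin d → ℝ} (hw : ∀ i, 0 ≤ w i) (hg : ∀ i, g i ≤ 0)
    (hz : ∑ i, w i * g i = 0) : ∀ i, w i = 0 ∨ g i = 0 := by
  intro i
  have hterm : ∀ i ∈ Finset.univ, w i * g i ≤ 0 := by
    intro i _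
    have := mul_le_mul_of_nonneg_left (hg i) (hw i)
    simpa using this
  have := (Finset.sum_eq_zero_iff_of_nonpos hterm).mp hz i (Finset.mem_univ i)
  exact mul_eq_zero.mp this

lemma swap_sum {m n : ℕ} (M : Fin m → Fin n → ℝ) (x : Fin m → ℝ) (y : Fin n → ℝ) :
    ∑ i, ∑ j, x i * (M i j * y j) = ∑ j, (∑ i, x i * M i j) * y j := by
  rw [Finset.sum_comm]
  refine Finset.sum_congr rfl fun j _ => ?_
  rw [Finset.sum_mul]
  exact Finset.sum_congr rfl fun i _ => by ring

/-- The "value" of a triple `(λ, x, y)` for the zero-sum game `A i j - β j * λ`. -/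
def lval {m n : ℕ} (A : Fin m → Fin n → ℝ) (β : Fin n → ℝ)
    (p : ℝ × (Fin m → ℝ) × (Fin n → ℝ)) : ℝ :=
  ∑ i, ∑ j, p.2.1 i * ((A i j - β j * p.1) * p.2.2 j)

/-- The set of triples `(λ, x, y)` where `(x, y)` is an equilibrium of the zero-sum
game with matrix `A i j - β j * λ`. -/
def SS {m n : ℕ} (A : Fin m → Fin n → ℝ) (β : Fin n → ℝ) :
    Set (ℝ × (Fin m → ℝ) × (Fin n → ℝ)) :=
  {p | InSimplex p.2.1 ∧ InSimplex p.2.2 ∧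
    (∀ i, ∑ j, (A i j - β j * p.1) * p.2.2 j ≤ lval A β p) ∧
    (∀ j, lval A β p ≤ ∑ i, p.2.1 i * (A i j - β j * p.1))}

lemma mem_SS_of_v {m n : ℕ} (A : Fin m → Fin n → ℝ) (β : Fin n → ℝ)
    {lam v : ℝ} {x : Fin m → ℝ} {y : Fin n → ℝ}
    (hx : InSimplex x) (hy : InSimplex y)
    (h1 : ∀ i, ∑ j, (A i j - β j * lam) * y j ≤ v)
    (h2 : ∀ j, v ≤ ∑ i, x i * (A i j - β j * lam)) :
    (lam, x, y) ∈ SS A β ∧ lval A β (lam, x, y) = v := by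
  have hv : lval A β (lam, x, y) = v :=
    value_eq (fun i j => A i j - β j * lam) hx hy h1 h2
  exact ⟨⟨hx, hy, fun i => hv ▸ h1 i, fun j => hv ▸ h2 j⟩, hv⟩

lemma SS_slice_nonempty {m n : ℕ} (hm : 1 ≤ m) (hn : 1 ≤ n)
    (A : Fin m → Fin n → ℝ) (β : Fin n → ℝ) (lam : ℝ) :
    ∃ x y, (lam, x, y) ∈ SS A β := by
  obtain ⟨x, y, v, hx, hy, h1, h2⟩ := minimax hm hn (fun i j => A i j - β j * lam)
  exact ⟨x, y, (mem_SS_of_v A β hx hy h1 h2).1⟩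

lemma continuous_lval {m n : ℕ} (A : Fin m → Fin n → ℝ) (β : Fin n → ℝ) :
    Continuous (lval A β) := by
  apply continuous_finset_sum
  intro i _
  apply continuous_finset_sum
  intro j _
  exact ((continuous_apply i).comp (continuous_fst.comp continuous_snd)).mul
    ((continuous_const.sub (continuous_const.mul continuous_fst)).mul
      ((continuous_apply j).comp (continuous_snd.comp continuous_snd)))

lemma isClosed_SS {m n : ℕ} (A : Fin m → Fin n → ℝ) (β : Fin n → ℝ) :
    IsClosed (SS A β) := by
  have hx : ∀ i, Continuous fun p : ℝ × (Fin m → ℝ) × (Fin n → ℝ) => p.2.1 i :=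
    fun i => (continuous_apply i).comp (continuous_fst.comp continuous_snd)
  have hy : ∀ j, Continuous fun p : ℝ × (Fin m → ℝ) × (Fin n → ℝ) => p.2.2 j :=
    fun j => (continuous_apply j).comp (continuous_snd.comp continuous_snd)
  have hrow : ∀ i, Continuous fun p : ℝ × (Fin m → ℝ) × (Fin n → ℝ) =>
      ∑ j, (A i j - β j * p.1) * p.2.2 j := fun i =>
    continuous_finset_sum _ fun j _ =>
      (continuous_const.sub (continuous_const.mul continuous_fst)).mul (hy j)
  have hcol : ∀ j, Continuous fun p : ℝ × (Fin m → ℝ) × (Fin n → ℝ) =>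
      ∑ i, p.2.1 i * (A i j - β j * p.1) := fun j =>
    continuous_finset_sum _ fun i _ =>
      (hx i).mul (continuous_const.sub (continuous_const.mul continuous_fst))
  have heq : SS A β =
      ((⋂ i, {p : ℝ × (Fin m → ℝ) × (Fin n → ℝ) | 0 ≤ p.2.1 i}) ∩
        {p | ∑ i, p.2.1 i = 1}) ∩
      (((⋂ j, {p : ℝ × (Fin m → ℝ) × (Fin n → ℝ) | 0 ≤ p.2.2 j}) ∩
        {p | ∑ j, p.2.2 j = 1}) ∩
      ((⋂ i, {p | ∑ j, (A i j - β j * p.1) * p.2.2 j ≤ lval A β p}) ∩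
      (⋂ j, {p | lval A β p ≤ ∑ i, p.2.1 i * (A i j - β j * p.1)}))) := by
    ext p
    simp only [SS, InSimplex, Set.mem_setOf_eq, Set.mem_inter_iff, Set.mem_iInter]
  rw [heq]
  refine (IsClosed.inter (IsClosed.inter ?_ ?_) (IsClosed.inter (IsClosed.inter ?_ ?_)
    (IsClosed.inter ?_ ?_)))
  · exact isClosed_iInter fun i => isClosed_le continuous_const (hx i)
  · exact isClosed_eq (continuous_finset_sum _ fun i _ => hx i) continuous_const
  · exact isClosed_iInter fun j => isClosed_le continuous_const (hy j)
  · exact isClosed_eq (continuous_finset_sum _ fun j _ => hy j) continuous_const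
  · exact isClosed_iInter fun i => isClosed_le (hrow i) (continuous_lval A β)
  · exact isClosed_iInter fun j => isClosed_le (continuous_lval A β) (hcol j)

lemma convex_SS_slice {m n : ℕ} (A : Fin m → Fin n → ℝ) (β : Fin n → ℝ) (lam : ℝ) :
    Convex ℝ {q : (Fin m → ℝ) × (Fin n → ℝ) | (lam, q) ∈ SS A β} := by
  rintro ⟨x1, y1⟩ h1 ⟨x2, y2⟩ h2 a b ha hb hab
  obtain ⟨hx1, hy1, hr1, hc1⟩ := h1
  obtain ⟨hx2, hy2, hr2, hc2⟩ := h2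
  show (lam, a • x1 + b • x2, a • y1 + b • y2) ∈ SS A β
  have hx : InSimplex (a • x1 + b • x2) := by
    constructor
    · intro i
      simp only [Pi.add_apply, Pi.smul_apply, smul_eq_mul]
      exact add_nonneg (mul_nonneg ha (hx1.1 i)) (mul_nonneg hb (hx2.1 i))
    · simp only [Pi.add_apply, Pi.smul_apply, smul_eq_mul]
      rw [Finset.sum_add_distrib, ← Finset.mul_sum, ← Finset.mul_sum, hx1.2, hx2.2]
      simpa using hab
  have hy : InSimplex (a • y1 + b • y2) := by
    constructor
    · intro j
      simp only [Pi.add_apply, Pi.smul_apply, smul_eq_mul]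
      exact add_nonneg (mul_nonneg ha (hy1.1 j)) (mul_nonneg hb (hy2.1 j))
    · simp only [Pi.add_apply, Pi.smul_apply, smul_eq_mul]
      rw [Finset.sum_add_distrib, ← Finset.mul_sum, ← Finset.mul_sum, hy1.2, hy2.2]
      simpa using hab
  refine (mem_SS_of_v A β hx hy (v := a * lval A β (lam, x1, y1) + b * lval A β (lam, x2, y2))
    ?_ ?_).1
  · intro i
    have e : ∑ j, (A i j - β j * lam) * (a • y1 + b • y2) j
        = a * ∑ j, (A i j - β j * lam) * y1 j + b * ∑ j, (A i j - β j * lam) * y2 j := by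
      simp only [Pi.add_apply, Pi.smul_apply, smul_eq_mul, mul_add, Finset.sum_add_distrib,
        Finset.mul_sum]
      congr 1 <;> exact Finset.sum_congr rfl fun j _ => by ring
    rw [e]
    exact add_le_add (mul_le_mul_of_nonneg_left (hr1 i) ha)
      (mul_le_mul_of_nonneg_left (hr2 i) hb)
  · intro j
    have e : ∑ i, (a • x1 + b • x2) i * (A i j - β j * lam)
        = a * ∑ i, x1 i * (A i j - β j * lam) + b * ∑ i, x2 i * (A i j - β j * lam) := by
      simp only [Pi.add_apply, Pi.smul_apply, smul_eq_mul, add_mul, Finset.sum_add_distrib,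
        Finset.mul_sum]
      congr 1 <;> exact Finset.sum_congr rfl fun i _ => by ring
    rw [e]
    exact add_le_add (mul_le_mul_of_nonneg_left (hc1 j) ha)
      (mul_le_mul_of_nonneg_left (hc2 j) hb)

lemma F_closed {m n : ℕ} (A : Fin m → Fin n → ℝ) (β : Fin n → ℝ)
    {u w : Set (ℝ × (Fin m → ℝ) × (Fin n → ℝ))} (hw : IsOpen w)
    (hsub : SS A β ⊆ u ∪ w) (hempty : SS A β ∩ (u ∩ w) = ∅) :
    IsClosed {lam | ∃ p ∈ SS A β ∩ u, p.1 = lam} := by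
  apply IsSeqClosed.isClosed
  intro ls l hmem hlim
  choose p hp hp1 using hmem
  have hcomp : IsCompact ((stdSimplex ℝ (Fin m)) ×ˢ (stdSimplex ℝ (Fin n))) :=
    (isCompact_stdSimplex _ _).prod (isCompact_stdSimplex _ _)
  have hmemc : ∀ k, (p k).2 ∈ (stdSimplex ℝ (Fin m)) ×ˢ (stdSimplex ℝ (Fin n)) := by
    intro k
    obtain ⟨⟨hx, hy, _, _⟩, _⟩ := hp k
    exact Set.mem_prod.mpr ⟨⟨hx.1, hx.2⟩, ⟨hy.1, hy.2⟩⟩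
  obtain ⟨q, _, φ, hφ, hqt⟩ := hcomp.tendsto_subseq hmemc
  have hlimφ : Filter.Tendsto (fun k => (p (φ k)).1) Filter.atTop (nhds l) := by
    have h0 : Filter.Tendsto (fun k => ls (φ k)) Filter.atTop (nhds l) :=
      hlim.comp hφ.tendsto_atTop
    have : (fun k => (p (φ k)).1) = fun k => ls (φ k) := funext fun k => hp1 (φ k)
    rw [this]; exact h0
  have hlimp : Filter.Tendsto (fun k => p (φ k)) Filter.atTop (nhds (l, q)) := by
    rw [nhds_prod_eq]
    have := hlimφ.prodMk hqt
    simpa using this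
  have hLq : (l, q) ∈ SS A β := (isClosed_SS A β).mem_of_tendsto hlimp
    (Filter.Eventually.of_forall fun k => (hp (φ k)).1)
  rcases hsub hLq with h | h
  · exact ⟨(l, q), ⟨hLq, h⟩, rfl⟩
  · exfalso
    have hev : ∀ᶠ k in Filter.atTop, p (φ k) ∈ w := hlimp.eventually_mem (hw.mem_nhds h)
    obtain ⟨k, hk⟩ := hev.exists
    have : p (φ k) ∈ SS A β ∩ (u ∩ w) := ⟨(hp (φ k)).1, (hp (φ k)).2, hk⟩
    rw [hempty] at this
    exact this

lemma isPreconnected_SS {m n : ℕ} (hm : 1 ≤ m) (hn : 1 ≤ n)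
    (A : Fin m → Fin n → ℝ) (β : Fin n → ℝ) : IsPreconnected (SS A β) := by
  intro u w hu hw hsub hSu hSw
  by_contra hcon
  rw [Set.not_nonempty_iff_eq_empty] at hcon
  set F : Set ℝ := {lam | ∃ p ∈ SS A β ∩ u, p.1 = lam} with hF
  set G : Set ℝ := {lam | ∃ p ∈ SS A β ∩ w, p.1 = lam} with hG
  have hFc : IsClosed F := F_closed A β hw hsub hcon
  have hGc : IsClosed G := by
    refine F_closed A β hu ?_ ?_
    · intro p hp; rcases hsub hp with h | h
      · exact Or.inr h
      · exact Or.inl h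
    · rw [Set.inter_comm w u]; exact hcon
  have huniv : ∀ lam : ℝ, lam ∈ F ∪ G := by
    intro lam
    obtain ⟨x, y, hxy⟩ := SS_slice_nonempty hm hn A β lam
    rcases hsub hxy with h | h
    · exact Or.inl ⟨(lam, x, y), ⟨hxy, h⟩, rfl⟩
    · exact Or.inr ⟨(lam, x, y), ⟨hxy, h⟩, rfl⟩
  have hdisj : ∀ lam : ℝ, lam ∈ F → lam ∈ G → False := by
    rintro lam ⟨p, ⟨hpS, hpu⟩, hp1⟩ ⟨q, ⟨hqS, hqw⟩, hq1⟩
    set ι : (Fin m → ℝ) × (Fin n → ℝ) → ℝ × (Fin m → ℝ) × (Fin n → ℝ) :=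
      fun r => (lam, r) with hι
    have hιc : Continuous ι := continuous_const.prodMk continuous_id
    have hpre := (convex_SS_slice A β lam).isPreconnected
    have hpeq : ι p.2 = p := by show (lam, p.2) = p; rw [← hp1]
    have hqeq : ι q.2 = q := by show (lam, q.2) = q; rw [← hq1]
    obtain ⟨r, hr1, hr2, hr3⟩ := hpre (ι ⁻¹' u) (ι ⁻¹' w) (hu.preimage hιc) (hw.preimage hιc)
      (fun r hr => hsub hr)
      ⟨p.2, ⟨by show ι p.2 ∈ SS A β; rw [hpeq]; exact hpS,
        by show ι p.2 ∈ u; rw [hpeq]; exact hpu⟩⟩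
      ⟨q.2, ⟨by show ι q.2 ∈ SS A β; rw [hqeq]; exact hqS,
        by show ι q.2 ∈ w; rw [hqeq]; exact hqw⟩⟩
    have : (lam, r) ∈ SS A β ∩ (u ∩ w) := ⟨hr1, hr2, hr3⟩
    rw [hcon] at this
    exact this
  have hFG : F = Gᶜ := by
    ext lam
    constructor
    · intro h1 h2; exact hdisj lam h1 h2
    · intro h1; rcases huniv lam with h | h
      · exact h
      · exact absurd h h1
  have hFopen : IsOpen F := by rw [hFG]; exact hGc.isOpen_compl
  rcases isClopen_iff.mp ⟨hFc, hFopen⟩ with h | h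
  · obtain ⟨p, hpS, hpu⟩ := hSu
    have : p.1 ∈ F := ⟨p, ⟨hpS, hpu⟩, rfl⟩
    rw [h] at this; exact this
  · obtain ⟨q, hqS, hqw⟩ := hSw
    have : q.1 ∈ G := ⟨q, ⟨hqS, hqw⟩, rfl⟩
    exact hdisj q.1 (h ▸ Set.mem_univ q.1) this

lemma col_id {m n : ℕ} (A : Fin m → Fin n → ℝ) (β : Fin n → ℝ) (lam : ℝ)
    {x : Fin m → ℝ} (hx2 : ∑ i, x i = 1) (j : Fin n) :
    ∑ i, x i * (A i j - β j * lam) = (∑ i, x i * A i j) - β j * lam := by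
  calc ∑ i, x i * (A i j - β j * lam) = ∑ i, (x i * A i j - β j * lam * x i) :=
      Finset.sum_congr rfl fun i _ => by ring
    _ = ∑ i, x i * A i j - β j * lam * ∑ i, x i := by
      rw [Finset.sum_sub_distrib, Finset.mul_sum]
    _ = _ := by rw [hx2, mul_one]

lemma row_id {m n : ℕ} (A : Fin m → Fin n → ℝ) (β : Fin n → ℝ) (lam : ℝ)
    (y : Fin n → ℝ) (i : Fin m) :
    ∑ j, (A i j - β j * lam) * y j = (∑ j, A i j * y j) - lam * ∑ j, β j * y j := by
  calc ∑ j, (A i j - β j * lam) * y j = ∑ j, (A i j * y j - lam * (β j * y j)) :=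
      Finset.sum_congr rfl fun j _ => by ring
    _ = _ := by rw [Finset.sum_sub_distrib, Finset.mul_sum]

lemma neg_col {m n : ℕ} (A : Fin m → Fin n → ℝ) (x : Fin m → ℝ) (j : Fin n) :
    ∑ i, x i * (-A i j) = -(∑ i, x i * A i j) := by
  rw [← Finset.sum_neg_distrib]
  exact Finset.sum_congr rfl fun i _ => by ring

lemma xrow_lval {m n : ℕ} (A : Fin m → Fin n → ℝ) (β : Fin n → ℝ) (lam : ℝ)
    (x : Fin m → ℝ) (y : Fin n → ℝ) :
    ∑ i, x i * (∑ j, (A i j - β j * lam) * y j) = lval A β (lam, x, y) :=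
  Finset.sum_congr rfl fun i _ => Finset.mul_sum _ _ _

lemma ycol_lval {m n : ℕ} (A : Fin m → Fin n → ℝ) (β : Fin n → ℝ) (lam : ℝ)
    (x : Fin m → ℝ) (y : Fin n → ℝ) :
    ∑ j, (∑ i, x i * (A i j - β j * lam)) * y j = lval A β (lam, x, y) :=
  (swap_sum (fun i j => A i j - β j * lam) x y).symm

/-- The map sending an equilibrium triple to a fully labeled pair. -/
def gmap {m n : ℕ} (A : Fin m → Fin n → ℝ) (β : Fin n → ℝ)
    (p : ℝ × (Fin m → ℝ) × (Fin n → ℝ)) :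
    ((Fin n → ℝ) × ℝ) × ((Fin m → ℝ) × ℝ × ℝ) :=
  ((p.2.2, lval A β p + p.1 * ∑ j, β j * p.2.2 j), (p.2.1, p.1, -(lval A β p)))

lemma gmap_mem_N {m n : ℕ} (A : Fin m → Fin n → ℝ) (β : Fin n → ℝ)
    {p : ℝ × (Fin m → ℝ) × (Fin n → ℝ)} (hp : p ∈ SS A β) :
    MemN A (fun i j => -A i j) β (gmap A β p) := by
  obtain ⟨lam, x, y⟩ := p
  obtain ⟨hx, hy, hr, hc⟩ := hp
  refine ⟨⟨fun i => ?_, hy.1, hy.2⟩, ⟨hx.1, fun j => ?_, hx.2⟩, fun l => ?_⟩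
  · -- MemP row inequality
    have h := hr i
    rw [row_id] at h
    show ∑ j, A i j * y j ≤ lval A β (lam, x, y) + lam * ∑ j, β j * y j
    linarith
  · -- MemQ' column inequality
    have h := hc j
    rw [col_id A β lam hx.2] at h
    show ∑ i, x i * (-A i j) + β j * lam ≤ -(lval A β (lam, x, y))
    rw [neg_col]
    linarith
  · cases l with
    | inl i =>
      have hz : ∑ i, x i * ((∑ j, (A i j - β j * lam) * y j) - lval A β (lam, x, y)) = 0 := by
        calc ∑ i, x i * ((∑ j, (A i j - β j * lam) * y j) - lval A β (lam, x, y))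
            = ∑ i, (x i * (∑ j, (A i j - β j * lam) * y j)
                - x i * lval A β (lam, x, y)) := Finset.sum_congr rfl fun i _ => by ring
          _ = ∑ i, x i * (∑ j, (A i j - β j * lam) * y j)
                - ∑ i, x i * lval A β (lam, x, y) := Finset.sum_sub_distrib _ _
          _ = 0 := by
              rw [xrow_lval, ← Finset.sum_mul, hx.2, one_mul, sub_self]
      rcases compl_zero hx.1 (fun i => sub_nonpos.mpr (hr i)) hz i with h | h
      · exact Or.inr h
      · left
        show ∑ j, A i j * y j = lval A β (lam, x, y) + lam * ∑ j, β j * y j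
        have := row_id A β lam y i
        have h2 : ∑ j, (A i j - β j * lam) * y j = lval A β (lam, x, y) := by linarith
        linarith
    | inr j =>
      have hz : ∑ j, y j * (lval A β (lam, x, y) - ∑ i, x i * (A i j - β j * lam)) = 0 := by
        calc ∑ j, y j * (lval A β (lam, x, y) - ∑ i, x i * (A i j - β j * lam))
            = ∑ j, (lval A β (lam, x, y) * y j
                - (∑ i, x i * (A i j - β j * lam)) * y j) :=
              Finset.sum_congr rfl fun j _ => by ring
          _ = ∑ j, lval A β (lam, x, y) * y j
                - ∑ j, (∑ i, x i * (A i j - β j * lam)) * y j := Finset.sum_sub_distrib _ _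
          _ = 0 := by
              rw [ycol_lval, ← Finset.mul_sum, hy.2, mul_one, sub_self]
      rcases compl_zero hy.1 (fun j => sub_nonpos.mpr (hc j)) hz j with h | h
      · exact Or.inl h
      · right
        show ∑ i, x i * (-A i j) + β j * lam = -(lval A β (lam, x, y))
        rw [neg_col]
        have := col_id A β lam hx.2 j
        have h2 : ∑ i, x i * (A i j - β j * lam) = lval A β (lam, x, y) := by linarith
        linarith

lemma N_sub_gmap {m n : ℕ} (A : Fin m → Fin n → ℝ) (β : Fin n → ℝ)
    {p : ((Fin n → ℝ) × ℝ) × ((Fin m → ℝ) × ℝ × ℝ)}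
    (hp : MemN A (fun i j => -A i j) β p) : p ∈ gmap A β '' SS A β := by
  obtain ⟨⟨y, pi1⟩, ⟨x, lam, pi2⟩⟩ := p
  obtain ⟨⟨hrow, hynn, hysum⟩, ⟨hxnn, hcol, hxsum⟩, hlab⟩ := hp
  -- label consequences
  have r1 : ∑ i, x i * (∑ j, A i j * y j) = pi1 := by
    have e : ∀ i, x i * (∑ j, A i j * y j) = x i * pi1 := by
      intro i
      rcases hlab (Sum.inl i) with h | h
      · simp only [LabelP, Set.mem_setOf_eq, Sum.elim_inl] at h
        rw [h]
      · simp only [LabelQ', Set.mem_setOf_eq, Sum.elim_inl] at h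
        rw [h, zero_mul, zero_mul]
    rw [Finset.sum_congr rfl fun i _ => e i, ← Finset.sum_mul, hxsum, one_mul]
  have r2 : ∑ j, y j * (∑ i, x i * (-A i j) + β j * lam) = pi2 := by
    have e : ∀ j, y j * (∑ i, x i * (-A i j) + β j * lam) = y j * pi2 := by
      intro j
      rcases hlab (Sum.inr j) with h | h
      · simp only [LabelP, Set.mem_setOf_eq, Sum.elim_inr] at h
        rw [h, zero_mul, zero_mul]
      · simp only [LabelQ', Set.mem_setOf_eq, Sum.elim_inr] at h
        rw [h]
    rw [Finset.sum_congr rfl fun j _ => e j, ← Finset.sum_mul, hysum, one_mul]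
  -- the key identity: lam * (β ⬝ y) = pi1 + pi2
  have hS1 : ∑ j, (∑ i, x i * A i j) * y j = pi1 := by
    rw [← swap_sum A x y, ← r1]
    exact Finset.sum_congr rfl fun i _ => (Finset.mul_sum _ _ _).symm
  have hr2' : -(∑ j, (∑ i, x i * A i j) * y j) + lam * ∑ j, β j * y j = pi2 := by
    rw [← r2]
    have e : ∀ j, y j * (∑ i, x i * (-A i j) + β j * lam)
        = -((∑ i, x i * A i j) * y j) + lam * (β j * y j) := by
      intro j
      rw [neg_col]
      ring
    rw [Finset.sum_congr rfl fun j _ => e j, Finset.sum_add_distrib, ← Finset.mul_sum]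
    rw [Finset.sum_neg_distrib]
  have hkey : lam * ∑ j, β j * y j = pi1 + pi2 := by
    rw [hS1] at hr2'
    linarith
  -- equilibrium conditions
  have cond_row : ∀ i, ∑ j, (A i j - β j * lam) * y j ≤ -pi2 := by
    intro i
    rw [row_id]
    have := hrow i
    linarith
  have cond_col : ∀ j, -pi2 ≤ ∑ i, x i * (A i j - β j * lam) := by
    intro j
    rw [col_id A β lam hxsum]
    have h := hcol j
    rw [neg_col] at h
    linarith
  obtain ⟨hmem, hval⟩ := mem_SS_of_v A β ⟨hxnn, hxsum⟩ ⟨hynn, hysum⟩ cond_row cond_col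
  refine ⟨(lam, x, y), hmem, ?_⟩
  show ((y, lval A β (lam, x, y) + lam * ∑ j, β j * y j), (x, lam, -(lval A β (lam, x, y))))
    = ((y, pi1), (x, lam, pi2))
  rw [hval]
  simp only [Prod.mk.injEq, true_and, and_true]
  refine ⟨by linarith, by ring⟩

lemma continuous_gmap {m n : ℕ} (A : Fin m → Fin n → ℝ) (β : Fin n → ℝ) :
    Continuous (gmap A β) := by
  have hy : ∀ j, Continuous fun p : ℝ × (Fin m → ℝ) × (Fin n → ℝ) => p.2.2 j :=
    fun j => (continuous_apply j).comp (continuous_snd.comp continuous_snd)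
  refine Continuous.prodMk (Continuous.prodMk ?_ ?_) (Continuous.prodMk ?_
    (Continuous.prodMk ?_ ?_))
  · exact continuous_snd.comp continuous_snd
  · exact (continuous_lval A β).add
      (continuous_fst.mul (continuous_finset_sum _ fun j _ => continuous_const.mul (hy j)))
  · exact continuous_fst.comp continuous_snd
  · exact continuous_fst
  · exact (continuous_lval A β).neg

/-- with `C = −A`, `A, β` nonzero and `P, Q'` nondegenerate, the set `N`
of fully-labeled pairs is nonempty and connected. -/
theorem N_connected {m n : ℕ} (hm : 1 ≤ m) (hn : 1 ≤ n)
    (A : Fin m → Fin n → ℝ) (β : Fin n → ℝ)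
    (hA : A ≠ 0) (hβ : β ≠ 0)
    (hP : ∀ v, MemP A v → (LabelP A v).ncard ≤ n)
    (hQ : ∀ w, MemQ' (fun i j => -A i j) β w → (LabelQ' (fun i j => -A i j) β w).ncard ≤ m + 1) :
    IsConnected {p : ((Fin n → ℝ) × ℝ) × ((Fin m → ℝ) × ℝ × ℝ) |
      MemN A (fun i j => -A i j) β p} := by
  have hset : {p : ((Fin n → ℝ) × ℝ) × ((Fin m → ℝ) × ℝ × ℝ) |
      MemN A (fun i j => -A i j) β p} = gmap A β '' SS A β := by
    ext p
    constructor
    · exact fun hp => N_sub_gmap A β hp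
    · rintro ⟨q, hq, rfl⟩
      exact gmap_mem_N A β hq
  rw [hset]
  have hSne : (SS A β).Nonempty := by
    obtain ⟨x, y, hxy⟩ := SS_slice_nonempty hm hn A β 0
    exact ⟨(0, x, y), hxy⟩
  exact IsConnected.image ⟨hSne, isPreconnected_SS hm hn A β⟩ _
    (continuous_gmap A β).continuousOn
end

section
/- Assume C = −A. Let v = (y,π₁), v' = (y',π₁') ∈ P and w = (x,λ,π₂), w' = (x',λ',π₂') ∈ Q'. If (v,w) ∈ N, (v',w) ∈ N, and (v,w') ∈ N, but (v',w') ∉ N, then (∑ j, β j * y j − ∑ j, β j * y' j) * (λ' − λ) > 0; in particular ∑ j, β j * y j ≠ ∑ j, β j * y' j and λ ≠ λ'. -/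
open Finset

lemma comp_sum {d : ℕ} (f g : Fin d → ℝ) (c : ℝ) (hx : ∑ i, f i = 1)
    (hlab : ∀ i, g i = c ∨ f i = 0) :
    ∑ i, f i * g i = c := by
  have h : ∀ i ∈ Finset.univ, f i * g i = f i * c := by
    intro i _; rcases hlab i with h | h <;> simp [h]
  rw [Finset.sum_congr rfl h, ← Finset.sum_mul, hx, one_mul]

lemma expandQ {m n : ℕ} (A : Fin m → Fin n → ℝ) (β : Fin n → ℝ)
    (x : Fin m → ℝ) (lam : ℝ) (y : Fin n → ℝ) :
    ∑ j, y j * (∑ i, x i * (-A i j) + β j * lam)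
      = -(∑ i, x i * ∑ j, A i j * y j) + lam * ∑ j, β j * y j := by
  have h1 : ∑ j, y j * ∑ i, x i * (-A i j)
      = -∑ i, x i * ∑ j, A i j * y j := by
    calc ∑ j, y j * ∑ i, x i * (-A i j)
        = ∑ j, ∑ i, -(x i * (A i j * y j)) := by
          refine Finset.sum_congr rfl fun j _ => ?_
          rw [Finset.mul_sum]
          exact Finset.sum_congr rfl fun i _ => by ring
      _ = ∑ i, ∑ j, -(x i * (A i j * y j)) := Finset.sum_comm
      _ = -∑ i, x i * ∑ j, A i j * y j := by
          simp [Finset.mul_sum]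
  simp only [mul_add, Finset.sum_add_distrib, h1]
  congr 1
  rw [Finset.mul_sum]
  exact Finset.sum_congr rfl fun j _ => by ring

/-- with `C = −A`, if `(v,w), (v',w), (v,w') ∈ N` but `(v',w') ∉ N`, then
`(βᵀy − βᵀy')(λ' − λ) > 0`; in particular `βᵀy ≠ βᵀy'` and `λ ≠ λ'`. -/
theorem monotonicity_step {m n : ℕ} (hm : 1 ≤ m) (hn : 1 ≤ n)
    (A : Fin m → Fin n → ℝ) (β : Fin n → ℝ)
    (y y' : Fin n → ℝ) (π₁ π₁' : ℝ) (x x' : Fin m → ℝ) (lam lam' π₂ π₂' : ℝ)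
    (h1 : MemN A (fun i j => -A i j) β ((y, π₁), (x, lam, π₂)))
    (h2 : MemN A (fun i j => -A i j) β ((y', π₁'), (x, lam, π₂)))
    (h3 : MemN A (fun i j => -A i j) β ((y, π₁), (x', lam', π₂')))
    (h4 : ¬ MemN A (fun i j => -A i j) β ((y', π₁'), (x', lam', π₂'))) :
    ((∑ j, β j * y j) - ∑ j, β j * y' j) * (lam' - lam) > 0 ∧
      (∑ j, β j * y j) ≠ (∑ j, β j * y' j) ∧ lam ≠ lam' := by
  obtain ⟨hP1, hQ1, hL1⟩ := h1
  obtain ⟨hP2, hQ2, hL2⟩ := h2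
  obtain ⟨hP3, hQ3, hL3⟩ := h3
  -- label extraction
  have lab1P : ∀ i, (∑ j, A i j * y j = π₁) ∨ x i = 0 := fun i => by
    have := hL1 (Sum.inl i); simp only [Set.mem_union, LabelP, LabelQ', Set.mem_setOf_eq, Sum.elim_inl, Sum.elim_inr] at this; tauto
  have lab1Q : ∀ j, (∑ i, x i * (-A i j) + β j * lam = π₂) ∨ y j = 0 := fun j => by
    have := hL1 (Sum.inr j); simp only [Set.mem_union, LabelP, LabelQ', Set.mem_setOf_eq, Sum.elim_inl, Sum.elim_inr] at this; tauto
  have lab2P : ∀ i, (∑ j, A i j * y' j = π₁') ∨ x i = 0 := fun i => by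
    have := hL2 (Sum.inl i); simp only [Set.mem_union, LabelP, LabelQ', Set.mem_setOf_eq, Sum.elim_inl, Sum.elim_inr] at this; tauto
  have lab2Q : ∀ j, (∑ i, x i * (-A i j) + β j * lam = π₂) ∨ y' j = 0 := fun j => by
    have := hL2 (Sum.inr j); simp only [Set.mem_union, LabelP, LabelQ', Set.mem_setOf_eq, Sum.elim_inl, Sum.elim_inr] at this; tauto
  have lab3P : ∀ i, (∑ j, A i j * y j = π₁) ∨ x' i = 0 := fun i => by
    have := hL3 (Sum.inl i); simp only [Set.mem_union, LabelP, LabelQ', Set.mem_setOf_eq, Sum.elim_inl, Sum.elim_inr] at this; tauto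
  have lab3Q : ∀ j, (∑ i, x' i * (-A i j) + β j * lam' = π₂') ∨ y j = 0 := fun j => by
    have := hL3 (Sum.inr j); simp only [Set.mem_union, LabelP, LabelQ', Set.mem_setOf_eq, Sum.elim_inl, Sum.elim_inr] at this; tauto
  -- complementarity equalities
  have E1 : ∑ i, x i * ∑ j, A i j * y j = π₁ :=
    comp_sum x (fun i => ∑ j, A i j * y j) π₁ hQ1.2.2 lab1P
  have E2 : ∑ i, x i * ∑ j, A i j * y' j = π₁' :=
    comp_sum x (fun i => ∑ j, A i j * y' j) π₁' hQ2.2.2 lab2P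
  have E3 : ∑ i, x' i * ∑ j, A i j * y j = π₁ :=
    comp_sum x' (fun i => ∑ j, A i j * y j) π₁ hQ3.2.2 lab3P
  have F1 : -(∑ i, x i * ∑ j, A i j * y j) + lam * ∑ j, β j * y j = π₂ := by
    rw [← expandQ]
    exact comp_sum y (fun j => ∑ i, x i * (-A i j) + β j * lam) π₂ hP1.2.2 lab1Q
  have F2 : -(∑ i, x i * ∑ j, A i j * y' j) + lam * ∑ j, β j * y' j = π₂ := by
    rw [← expandQ]
    exact comp_sum y' (fun j => ∑ i, x i * (-A i j) + β j * lam) π₂ hP2.2.2 lab2Q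
  have F3 : -(∑ i, x' i * ∑ j, A i j * y j) + lam' * ∑ j, β j * y j = π₂' := by
    rw [← expandQ]
    exact comp_sum y (fun j => ∑ i, x' i * (-A i j) + β j * lam') π₂' hP1.2.2 lab3Q
  -- failing label gives strict inequality
  have hfail : ∃ l, l ∉ LabelP A (y', π₁') ∪
      LabelQ' (fun i j => -A i j) β (x', lam', π₂') := by
    by_contra hc
    push_neg at hc
    exact h4 ⟨hP2, hQ3, hc⟩
  have b1 : ∀ i ∈ Finset.univ, x' i * (∑ j, A i j * y' j) ≤ x' i * π₁' := fun i _ =>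
    mul_le_mul_of_nonneg_left (hP2.1 i) (hQ3.1 i)
  have b2 : ∀ j ∈ Finset.univ,
      y' j * (∑ i, x' i * (-A i j) + β j * lam') ≤ y' j * π₂' := fun j _ =>
    mul_le_mul_of_nonneg_left (hQ3.2.1 j) (hP2.2.1 j)
  have s1 : ∑ i, x' i * ∑ j, A i j * y' j ≤ π₁' := by
    calc ∑ i, x' i * ∑ j, A i j * y' j ≤ ∑ i, x' i * π₁' := Finset.sum_le_sum b1
      _ = π₁' := by rw [← Finset.sum_mul, hQ3.2.2, one_mul]
  have s2 : ∑ j, y' j * (∑ i, x' i * (-A i j) + β j * lam') ≤ π₂' := by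
    calc ∑ j, y' j * (∑ i, x' i * (-A i j) + β j * lam') ≤ ∑ j, y' j * π₂' :=
        Finset.sum_le_sum b2
      _ = π₂' := by rw [← Finset.sum_mul, hP2.2.2, one_mul]
  have key : ∑ i, x' i * ∑ j, A i j * y' j
      + ∑ j, y' j * (∑ i, x' i * (-A i j) + β j * lam') < π₁' + π₂' := by
    obtain ⟨l, hl⟩ := hfail
    rcases l with i0 | j0
    · simp only [Set.mem_union, not_or, LabelP, LabelQ', Set.mem_setOf_eq, Sum.elim_inl, Sum.elim_inr] at hl
      obtain ⟨hne, hx0⟩ := hl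
      have hlt : ∑ j, A i0 j * y' j < π₁' := lt_of_le_of_ne (hP2.1 i0) hne
      have hxpos : 0 < x' i0 := lt_of_le_of_ne (hQ3.1 i0) (Ne.symm hx0)
      have : ∑ i, x' i * ∑ j, A i j * y' j < π₁' := by
        calc ∑ i, x' i * ∑ j, A i j * y' j < ∑ i, x' i * π₁' :=
            Finset.sum_lt_sum b1 ⟨i0, Finset.mem_univ i0,
              (mul_lt_mul_of_pos_left hlt hxpos)⟩
          _ = π₁' := by rw [← Finset.sum_mul, hQ3.2.2, one_mul]
      linarith
    · simp only [Set.mem_union, not_or, LabelP, LabelQ', Set.mem_setOf_eq, Sum.elim_inl, Sum.elim_inr] at hl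
      obtain ⟨hy0, hne⟩ := hl
      have hlt : ∑ i, x' i * (-A i j0) + β j0 * lam' < π₂' :=
        lt_of_le_of_ne (hQ3.2.1 j0) hne
      have hypos : 0 < y' j0 := lt_of_le_of_ne (hP2.2.1 j0) (Ne.symm hy0)
      have : ∑ j, y' j * (∑ i, x' i * (-A i j) + β j * lam') < π₂' := by
        calc ∑ j, y' j * (∑ i, x' i * (-A i j) + β j * lam') < ∑ j, y' j * π₂' :=
            Finset.sum_lt_sum b2 ⟨j0, Finset.mem_univ j0,
              (mul_lt_mul_of_pos_left hlt hypos)⟩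
          _ = π₂' := by rw [← Finset.sum_mul, hP2.2.2, one_mul]
      linarith
  rw [expandQ] at key
  -- key : T + (-T + lam' * By') < π₁' + π₂'
  have key2 : lam' * (∑ j, β j * y' j) < π₁' + π₂' := by linarith
  have hprod : ((∑ j, β j * y j) - ∑ j, β j * y' j) * (lam' - lam) > 0 := by
    nlinarith [key2, E1, E2, E3, F1, F2, F3]
  refine ⟨hprod, ?_, ?_⟩
  · intro he; rw [he] at hprod; simp at hprod
  · intro he; rw [he] at hprod; simp at hprod
end

section
/- For all (y,π₁) ∈ P and (x,λ,π₂) ∈ Q'^k, one has ∑ l, λ l * (∑ j, β l j * y j) − π₁ − π₂ ≤ 0, and equality holds if and only if ((y,π₁),(x,λ,π₂)) is a fully-labeled pair (an element of N^k). -/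
open Finset

/-- Membership in the extended polytope `Q'^k`. -/
def MemQk {m n k : ℕ} (A : Fin m → Fin n → ℝ) (β : Fin k → Fin n → ℝ)
    (w : (Fin m → ℝ) × (Fin k → ℝ) × ℝ) : Prop :=
  (∀ i, 0 ≤ w.1 i) ∧
    (∀ j, ∑ i, w.1 i * (-A i j) + ∑ l, β l j * w.2.1 l ≤ w.2.2) ∧
    ∑ i, w.1 i = 1

/-- Tight labels at a point of `Q'^k`. -/
def LabelQk {m n k : ℕ} (A : Fin m → Fin n → ℝ) (β : Fin k → Fin n → ℝ)
    (w : (Fin m → ℝ) × (Fin k → ℝ) × ℝ) : Set (Fin m ⊕ Fin n) :=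
  {s | Sum.elim (fun i => w.1 i = 0)
    (fun j => ∑ i, w.1 i * (-A i j) + ∑ l, β l j * w.2.1 l = w.2.2) s}

/-- `p` is a fully-labeled pair of `P × Q'^k`, i.e. an element of `N^k`. -/
def MemNk {m n k : ℕ} (A : Fin m → Fin n → ℝ) (β : Fin k → Fin n → ℝ)
    (p : ((Fin n → ℝ) × ℝ) × ((Fin m → ℝ) × (Fin k → ℝ) × ℝ)) : Prop :=
  MemP A p.1 ∧ MemQk A β p.2 ∧
    ∀ s : Fin m ⊕ Fin n, s ∈ LabelP A p.1 ∪ LabelQk A β p.2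

/-- for all `(y,π₁) ∈ P` and `(x,λ,π₂) ∈ Q'^k`,
`∑ l, λ l (β lᵀ y) − π₁ − π₂ ≤ 0`, with equality iff the pair is fully labeled. -/
theorem rankk_equality_iff_fully_labeled {m n k : ℕ}
    (hm : 1 ≤ m) (hn : 1 ≤ n) (hk : 1 ≤ k)
    (A : Fin m → Fin n → ℝ) (β : Fin k → Fin n → ℝ)
    (y : Fin n → ℝ) (π₁ : ℝ) (x : Fin m → ℝ) (lam : Fin k → ℝ) (π₂ : ℝ)
    (hv : MemP A (y, π₁)) (hw : MemQk A β (x, lam, π₂)) :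
    (∑ l, lam l * (∑ j, β l j * y j)) - π₁ - π₂ ≤ 0 ∧
      ((∑ l, lam l * (∑ j, β l j * y j)) - π₁ - π₂ = 0 ↔
        MemNk A β ((y, π₁), (x, lam, π₂))) := by
  obtain ⟨hP1, hP2, hP3⟩ := hv
  obtain ⟨hQ1, hQ2, hQ3⟩ := hw
  simp only at hP1 hP2 hP3 hQ1 hQ2 hQ3
  set T : Fin m → ℝ := fun i => x i * (π₁ - ∑ j, A i j * y j) with hT
  set U : Fin n → ℝ := fun j => y j * (π₂ - (∑ i, x i * (-A i j) + ∑ l, β l j * lam l)) with hU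
  have hTnn : ∀ i, 0 ≤ T i := fun i => mul_nonneg (hQ1 i) (by linarith [hP1 i])
  have hUnn : ∀ j, 0 ≤ U j := fun j => mul_nonneg (hP2 j) (by linarith [hQ2 j])
  have hST : ∑ i, T i = π₁ - ∑ i, ∑ j, x i * (A i j * y j) := by
    simp only [hT, mul_sub, Finset.mul_sum, Finset.sum_sub_distrib, ← Finset.sum_mul, hQ3,
      one_mul, mul_left_comm]
  have hSU : ∑ j, U j = π₂ + (∑ i, ∑ j, x i * (A i j * y j))
      - ∑ l, lam l * (∑ j, β l j * y j) := by
    have h1 : ∑ j, U j = π₂ - (∑ j, y j * ∑ i, x i * (-A i j))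
        - ∑ j, y j * ∑ l, β l j * lam l := by
      simp only [hU, mul_sub, mul_add, Finset.sum_sub_distrib, Finset.sum_add_distrib,
        ← Finset.sum_mul, hP3, one_mul]
      ring
    rw [h1]
    have h2 : ∑ j, y j * ∑ i, x i * (-A i j) = -∑ i, ∑ j, x i * (A i j * y j) := by
      rw [← Finset.sum_neg_distrib]
      simp_rw [Finset.mul_sum, ← Finset.sum_neg_distrib]
      rw [Finset.sum_comm]
      exact Finset.sum_congr rfl fun i _ => Finset.sum_congr rfl fun j _ => by ring
    have h3 : ∑ j, y j * ∑ l, β l j * lam l = ∑ l, lam l * (∑ j, β l j * y j) := by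
      simp_rw [Finset.mul_sum]
      rw [Finset.sum_comm]
      exact Finset.sum_congr rfl fun l _ => Finset.sum_congr rfl fun j _ => by ring
    rw [h2, h3]; ring
  have key : (∑ l, lam l * (∑ j, β l j * y j)) - π₁ - π₂ = -(∑ i, T i + ∑ j, U j) := by
    rw [hST, hSU]; ring
  constructor
  · rw [key]
    have h1 : (0:ℝ) ≤ ∑ i, T i := Finset.sum_nonneg fun i _ => hTnn i
    have h2 : (0:ℝ) ≤ ∑ j, U j := Finset.sum_nonneg fun j _ => hUnn j
    linarith
  · rw [key, neg_eq_zero]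
    have hsum : ∑ i, T i + ∑ j, U j = 0 ↔ (∀ i, T i = 0) ∧ (∀ j, U j = 0) := by
      constructor
      · intro h
        have hU0 : (0:ℝ) ≤ ∑ j, U j := Finset.sum_nonneg fun j _ => hUnn j
        have hT0 : (0:ℝ) ≤ ∑ i, T i := Finset.sum_nonneg fun i _ => hTnn i
        have h1 : ∑ i, T i = 0 := by linarith
        have h2 : ∑ j, U j = 0 := by linarith
        constructor
        · intro i
          exact (Finset.sum_eq_zero_iff_of_nonneg (fun i _ => hTnn i)).1 h1 i (Finset.mem_univ i)
        · intro j
          exact (Finset.sum_eq_zero_iff_of_nonneg (fun j _ => hUnn j)).1 h2 j (Finset.mem_univ j)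
      · rintro ⟨h1, h2⟩
        rw [Finset.sum_eq_zero (fun i _ => h1 i), Finset.sum_eq_zero (fun j _ => h2 j), add_zero]
    rw [hsum]
    constructor
    · rintro ⟨h1, h2⟩
      refine ⟨⟨hP1, hP2, hP3⟩, ⟨hQ1, hQ2, hQ3⟩, ?_⟩
      rintro (i | j)
      · rcases mul_eq_zero.1 (h1 i) with h | h
        · exact Or.inr h
        · exact Or.inl (by simp only [LabelP, Set.mem_setOf_eq, Sum.elim_inl]; linarith)
      · rcases mul_eq_zero.1 (h2 j) with h | h
        · exact Or.inl h
        · exact Or.inr (by simp only [LabelQk, Set.mem_setOf_eq, Sum.elim_inr]; linarith)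
    · rintro ⟨-, -, hfull⟩
      constructor
      · intro i
        rcases hfull (Sum.inl i) with h | h
        · simp only [LabelP, Set.mem_setOf_eq, Sum.elim_inl] at h
          simp only [hT]; rw [h, sub_self, mul_zero]
        · simp only [LabelQk, Set.mem_setOf_eq, Sum.elim_inl] at h
          simp only [hT]; rw [h, zero_mul]
      · intro j
        rcases hfull (Sum.inr j) with h | h
        · simp only [LabelP, Set.mem_setOf_eq, Sum.elim_inr] at h
          simp only [hU]; rw [h, zero_mul]
        · simp only [LabelQk, Set.mem_setOf_eq, Sum.elim_inr] at h
          simp only [hU]; rw [h, sub_self, mul_zero]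
end
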